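/- For every positive integer d and every k with 1 ≤ k ≤ d, every tree γ ∈ Λ_{d,[k]} is simple. -/

import Mathlib

open scoped Classical

noncomputable section

/-- A (pre-)tree: a finite set of natural-number labelled vertices, a root,
a parent function and a weight function.  Well-formedness is the predicate
`IsTree` below. -/
structure PreTree where
  verts : Finset ℕ
  root : ℕ
  parent : ℕ → ℕ
  wt : ℕ → ℕ

namespace PreTree

/-- `t.Anc u v` means `u ⪯ v` : `u` lies on the (parent-)path from the root to `v`. -/
def Anc (t : PreTree) (u v : ℕ) : Prop := ∃ n : ℕ, t.parent^[n] v = u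

/-- strict ancestor `u ≺ v`. -/
def SAnc (t : PreTree) (u v : ℕ) : Prop := t.Anc u v ∧ u ≠ v

/-- `t` is an honest finite rooted tree: the root is a vertex, vertices are closed
under `parent`, the root is a fixed point of `parent`, and every vertex descends
from the root. -/
def IsTree (t : PreTree) : Prop :=
  t.root ∈ t.verts ∧ (∀ v ∈ t.verts, t.parent v ∈ t.verts) ∧
    t.parent t.root = t.root ∧ ∀ v ∈ t.verts, t.Anc t.root v

/-- The direct descendants (children) of a vertex. -/
def children (t : PreTree) (u : ℕ) : Finset ℕ :=
  t.verts.filter fun x => t.parent x = u ∧ x ≠ u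

/-- A vertex is terminal iff it has no (direct) descendants. -/
def Terminal (t : PreTree) (v : ℕ) : Prop := t.children v = ∅

/-- Terminally weighted: a vertex has positive weight iff it is terminal. -/
def TerminallyWeighted (t : PreTree) : Prop :=
  ∀ v ∈ t.verts, (0 < t.wt v ↔ t.children v = ∅)

/-- The total weight of a weighted tree. -/
def totalWeight (t : PreTree) : ℕ := ∑ v ∈ t.verts, t.wt v

/-- Stable: every ghost non-root vertex has at least three edges attached to it,
i.e. at least two children. -/
def Stable (t : PreTree) : Prop :=
  ∀ v ∈ t.verts, v ≠ t.root → t.wt v = 0 → 2 ≤ (t.children v).card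

/-- Semistable: every ghost non-root vertex has at least two edges attached to it,
i.e. at least one child. -/
def Semistable (t : PreTree) : Prop :=
  ∀ v ∈ t.verts, v ≠ t.root → t.wt v = 0 → 1 ≤ (t.children v).card

/-- `b` is the last vertex `v_r` of the trunk: every strict ancestor of `b` has
exactly one child while `b` does not. -/
def IsTrunkEnd (t : PreTree) (b : ℕ) : Prop :=
  b ∈ t.verts ∧ (t.children b).card ≠ 1 ∧ ∀ p, t.SAnc p b → (t.children p).card = 1

/-- The number of branches: the number of children of the trunk end (`0` for a
path tree).  For an honest tree the trunk end is unique, so the sum below has at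
most one nonzero term. -/
def br (t : PreTree) : ℕ :=
  ∑ b ∈ t.verts.filter (fun b => t.IsTrunkEnd b), (t.children b).card

/-- `b` is the branch vertex: the trunk end, provided it has at least two children. -/
def IsBranchVertex (t : PreTree) (b : ℕ) : Prop :=
  t.IsTrunkEnd b ∧ 2 ≤ (t.children b).card

/-- The subtree of `t` rooted at `v` (with the inherited weights). -/
def subtreeAt (t : PreTree) (v : ℕ) : PreTree where
  verts := t.verts.filter fun u => t.Anc v u
  root := v
  parent := fun u => if u = v then v else t.parent u
  wt := t.wt

/-- Simple: every branch (subtree rooted at a child of the branch vertex) is stable. -/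
def Simple (t : PreTree) : Prop :=
  ∀ b, t.IsTrunkEnd b → ∀ c ∈ t.children b, (t.subtreeAt c).Stable

/-- Pruning `t` from `v`: delete all strict descendants of `v` and add their
weights to the weight of `v`. -/
def prune (t : PreTree) (v : ℕ) : PreTree where
  verts := t.verts.filter fun u => ¬ t.SAnc v u
  root := t.root
  parent := t.parent
  wt := fun u =>
    if u = v then t.wt v + ∑ x ∈ t.verts.filter (fun x => t.SAnc v x), t.wt x
    else t.wt u

/-- Normalization: repeatedly prune from positively weighted non-terminal vertices
until every positive vertex is terminal.  In closed form: keep exactly the vertices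
with no positively weighted strict ancestor; a kept ghost vertex keeps weight `0`,
while a kept positive vertex absorbs the weights of all of its descendants. -/
def normalize (t : PreTree) : PreTree where
  verts := t.verts.filter fun u => ∀ p, t.SAnc p u → t.wt p = 0
  root := t.root
  parent := t.parent
  wt := fun u =>
    if t.wt u = 0 then 0 else ∑ x ∈ t.verts.filter (fun x => t.Anc u x), t.wt x

/-- Collapsing a (non-root) vertex `v`: merge `v` into its direct ascendant (the
merged vertex carries the sum of the two weights, the children of `v` become
children of the merged vertex), then normalize. -/
def collapse (t : PreTree) (v : ℕ) : PreTree :=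
  normalize
    { verts := t.verts.erase v
      root := t.root
      parent := fun u => if t.parent u = v then t.parent v else t.parent u
      wt := fun u => if u = t.parent v then t.wt (t.parent v) + t.wt v else t.wt u }

/-- Advancing a (non-root) vertex `v`: every direct descendant `u ≠ v` of the direct
ascendant of `v` is re-attached to `v`, then normalize. -/
def advance (t : PreTree) (v : ℕ) : PreTree :=
  normalize
    { verts := t.verts
      root := t.root
      parent := fun u =>
        if t.parent u = t.parent v ∧ u ≠ t.parent v ∧ u ≠ v then v else t.parent u
      wt := t.wt }

/-- The monoidal transforms of `t`: the advancings of the direct descendants of the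
branch vertex. -/
def Mon (t : PreTree) : Set PreTree :=
  {s | ∃ b v, t.IsBranchVertex b ∧ v ∈ t.children b ∧ s = t.advance v}

/-- Isomorphism of weighted rooted trees. -/
def Iso (s t : PreTree) : Prop :=
  ∃ f : ℕ → ℕ, Set.BijOn f (s.verts : Set ℕ) (t.verts : Set ℕ) ∧ f s.root = t.root ∧
    (∀ v ∈ s.verts, f (s.parent v) = t.parent (f v)) ∧
    ∀ v ∈ s.verts, t.wt (f v) = s.wt v

/-- `Λ_d`: stable terminally weighted rooted trees of total weight `d`. -/
def Lambda (d : ℕ) : Set PreTree :=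
  {t | t.IsTree ∧ t.Stable ∧ t.TerminallyWeighted ∧ t.totalWeight = d}

/-- `Λ_{d,[k]}`, defined inductively: `Λ_{d,[1]} = Λ_d` and for `k ≥ 2`,
`Λ_{d,[k]} = {γ ∈ Λ_{d,[k−1]} : br γ ≥ k+1} ∪ {γ ∈ Mon γ' : γ' ∈ Λ_{d,[k−1]}, br γ' = k}`. -/
def LambdaK (d : ℕ) : ℕ → Set PreTree
  | 0 => Lambda d
  | 1 => Lambda d
  | k + 2 =>
      {t | t ∈ LambdaK d (k + 1) ∧ k + 3 ≤ t.br} ∪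
        {t | ∃ t' ∈ LambdaK d (k + 1), t'.br = k + 2 ∧ t ∈ t'.Mon}

/-- Condition (†): every non-terminal direct descendant of the branch vertex has at
least two direct descendants. -/
def Dagger (t : PreTree) : Prop :=
  ∀ b v, t.IsBranchVertex b → v ∈ t.children b → t.children v ≠ ∅ →
    2 ≤ (t.children v).card

/-- `z_{[b,o]} = ∏_{b ⪰ a ≻ o} z_a`, the product of the variables `z_a` over all
non-root vertices `a` on the path from the root to `b` (including `a = b`).
The variable `z_a` is `X (Sum.inl a)`; the variable `w_b` is `X (Sum.inr b)`. -/
def zpath (R : Type) [CommRing R] (t : PreTree) (b : ℕ) : MvPolynomial (ℕ ⊕ ℕ) R :=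
  ∏ a ∈ t.verts.filter (fun a => t.Anc a b ∧ a ≠ t.root), MvPolynomial.X (Sum.inl a)

/-- `Φ_γ = ∑_{b terminal} z_{[b,o]} · w_b`. -/
def Phi (R : Type) [CommRing R] (t : PreTree) : MvPolynomial (ℕ ⊕ ℕ) R :=
  ∑ b ∈ t.verts.filter (fun b => t.children b = ∅),
    zpath R t b * MvPolynomial.X (Sum.inr b)

end PreTree

/-!
Stable trees are simple, and a monoidal transform of a simple terminally weighted tree is again
a simple terminally weighted tree; so by induction on `k` every tree of `Λ_{d,[k]}` is simple.
Let `v` be a child of the branch vertex `b`. If `v` is positive, normalizing after the advance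
prunes everything the siblings of `v` brought below it, leaving a path tree, which is vacuously
simple. If `v` is a ghost, nothing is pruned and `v` becomes the new branch vertex; its branches
are the old branches at the siblings of `v` and the subtrees at the children of `v`, which are
stable as subtrees of the stable branch at `v`.
-/

namespace PreTree

section Ancestry

variable {t : PreTree} {u v x y b c p : ℕ}

theorem IsTree.root_mem (ht : t.IsTree) : t.root ∈ t.verts := ht.1

theorem IsTree.parent_mem (ht : t.IsTree) (hx : x ∈ t.verts) : t.parent x ∈ t.verts :=
  ht.2.1 x hx

theorem IsTree.parent_root (ht : t.IsTree) : t.parent t.root = t.root := ht.2.2.1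

theorem IsTree.anc_root (ht : t.IsTree) (hx : x ∈ t.verts) : t.Anc t.root x := ht.2.2.2 x hx

theorem mem_children : y ∈ t.children x ↔ y ∈ t.verts ∧ t.parent y = x ∧ y ≠ x :=
  Finset.mem_filter

theorem IsTree.mem_of_mem_children (ht : t.IsTree) (hc : c ∈ t.children p) : p ∈ t.verts :=
  (mem_children.1 hc).2.1 ▸ ht.parent_mem (mem_children.1 hc).1

theorem anc_refl (t : PreTree) (u : ℕ) : t.Anc u u := ⟨0, rfl⟩

theorem anc_of_parent_eq (h : t.parent x = u) : t.Anc u x := ⟨1, h⟩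

theorem Anc.trans (h₁ : t.Anc u y) (h₂ : t.Anc y x) : t.Anc u x := by
  obtain ⟨m, rfl⟩ := h₁
  obtain ⟨n, rfl⟩ := h₂
  exact ⟨m + n, Function.iterate_add_apply _ _ _ _⟩

theorem Anc.anc_parent (h : t.Anc u x) (hne : u ≠ x) : t.Anc u (t.parent x) := by
  obtain ⟨_ | n, hn⟩ := h
  · exact absurd hn.symm hne
  · exact ⟨n, hn⟩

theorem Anc.tail_induction {P : ℕ → Prop} (h : t.Anc u x) (base : P u)
    (step : ∀ y z, t.Anc u y → t.parent z = y → P y → P z) : P x := by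
  obtain ⟨n, hn⟩ := h
  induction n generalizing x with
  | zero => obtain rfl : x = u := hn; exact base
  | succ n ih => exact step _ x ⟨n, hn⟩ rfl (ih hn)

theorem IsTree.eq_root_of_anc_root (ht : t.IsTree) (h : t.Anc u t.root) : u = t.root := by
  obtain ⟨n, rfl⟩ := h
  exact Function.iterate_fixed ht.parent_root n

theorem IsTree.anc_antisymm (ht : t.IsTree) (hx : x ∈ t.verts) (h₁ : t.Anc u x)
    (h₂ : t.Anc x u) : u = x := by
  obtain ⟨m, hm⟩ := h₁
  obtain ⟨k, hk⟩ := h₂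
  obtain ⟨n, hn⟩ := ht.anc_root hx
  rcases Nat.eq_zero_or_pos m with rfl | hm0
  · exact hm.symm
  -- `x` lies on a cycle of `parent` and also reaches the fixed point `root`, so `x = root`.
  have hper : Function.IsPeriodicPt t.parent (k + m) x := by
    show t.parent^[k + m] x = x
    rw [Function.iterate_add_apply, hm, hk]
  have hroot : x = t.root := calc
    x = t.parent^[(k + m) * n] x := (hper.mul_const n).eq.symm
    _ = t.parent^[(k + m) * n - n] (t.parent^[n] x) := by
      rw [← Function.iterate_add_apply, Nat.sub_add_cancel (Nat.le_mul_of_pos_left n (by omega))]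
    _ = t.root := by rw [hn, Function.iterate_fixed ht.parent_root]
  rw [← hm, hroot, Function.iterate_fixed ht.parent_root]

theorem Anc.mem (ht : t.IsTree) (hx : x ∈ t.verts) (h : t.Anc u x) : u ∈ t.verts := by
  obtain ⟨n, rfl⟩ := h
  induction n with
  | zero => exact hx
  | succ n ih => rw [Function.iterate_succ_apply']; exact ht.parent_mem ih

theorem SAnc.trans_anc (ht : t.IsTree) (hx : x ∈ t.verts) (h₁ : t.SAnc u y)
    (h₂ : t.Anc y x) : t.SAnc u x := by
  refine ⟨h₁.1.trans h₂, ?_⟩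
  rintro rfl
  exact h₁.2 (ht.anc_antisymm (h₂.mem ht hx) h₁.1 h₂)

theorem SAnc.not_anc (ht : t.IsTree) (hb : b ∈ t.verts) (h : t.SAnc b c) : ¬ t.Anc c b :=
  fun h' => h.2 (ht.anc_antisymm hb h' h.1).symm

theorem IsTree.not_anc_of_mem_children (ht : t.IsTree) (hc : c ∈ t.children b) :
    ¬ t.Anc c b :=
  SAnc.not_anc ht (ht.mem_of_mem_children hc)
    ⟨anc_of_parent_eq (mem_children.1 hc).2.1, (mem_children.1 hc).2.2.symm⟩

theorem SAnc.eq_or_sAnc_parent (h : t.SAnc p y) : p = t.parent y ∨ t.SAnc p (t.parent y) := by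
  by_cases hp : p = t.parent y
  · exact Or.inl hp
  · exact Or.inr ⟨h.1.anc_parent h.2, hp⟩

theorem SAnc.ne_root (ht : t.IsTree) (h : t.SAnc c x) : x ≠ t.root := by
  rintro rfl
  exact h.2 (ht.eq_root_of_anc_root h.1)

theorem IsTree.exists_child_of_sAnc (ht : t.IsTree) (hx : x ∈ t.verts) (h : t.SAnc p x) :
    ∃ c ∈ t.children p, t.Anc c x := by
  obtain ⟨hpx, hne⟩ := h
  revert hx hne
  refine Anc.tail_induction
    (P := fun z => z ∈ t.verts → p ≠ z → ∃ c ∈ t.children p, t.Anc c z) hpx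
    (fun _ h => absurd rfl h) ?_
  rintro y z - rfl ih hz hpz
  by_cases hpy : p = t.parent z
  · exact ⟨z, mem_children.2 ⟨hz, hpy.symm, fun h => hpz h.symm⟩, anc_refl t z⟩
  · obtain ⟨c, hc, hcy⟩ := ih (ht.parent_mem hz) hpy
    exact ⟨c, hc, hcy.trans (anc_of_parent_eq rfl)⟩

theorem TerminallyWeighted.children_eq_empty (htw : t.TerminallyWeighted) (hp : p ∈ t.verts)
    (hw : t.wt p ≠ 0) : t.children p = ∅ :=
  (htw p hp).1 (Nat.pos_of_ne_zero hw)

theorem TerminallyWeighted.wt_eq_zero_of_mem_children (htw : t.TerminallyWeighted)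
    (hp : p ∈ t.verts) (hc : c ∈ t.children p) : t.wt p = 0 := by
  by_contra hw
  simp [htw.children_eq_empty hp hw] at hc

theorem TerminallyWeighted.wt_eq_zero_of_sAnc (ht : t.IsTree) (htw : t.TerminallyWeighted)
    (hx : x ∈ t.verts) (h : t.SAnc p x) : t.wt p = 0 := by
  obtain ⟨c, hc, -⟩ := ht.exists_child_of_sAnc hx h
  exact htw.wt_eq_zero_of_mem_children (h.1.mem ht hx) hc

theorem IsTrunkEnd.anc_or_anc (ht : t.IsTree) (hb : t.IsTrunkEnd b) (hx : x ∈ t.verts) :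
    t.Anc b x ∨ t.Anc x b := by
  have hrx := ht.anc_root hx
  revert hx
  refine Anc.tail_induction (P := fun z => z ∈ t.verts → t.Anc b z ∨ t.Anc z b) hrx
    (fun _ => Or.inr (ht.anc_root hb.1)) ?_
  rintro y z - rfl ih hz
  rcases ih (ht.parent_mem hz) with hby | hyb
  · exact Or.inl (hby.trans (anc_of_parent_eq rfl))
  by_cases hyb' : t.parent z = b
  · exact Or.inl (anc_of_parent_eq hyb')
  by_cases hzy : z = t.parent z
  · exact Or.inr (hzy ▸ hyb)
  -- the trunk vertex `parent z` has a single child, which must be both `z` and an ancestor of `b`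
  obtain ⟨c, hc, hcb⟩ := ht.exists_child_of_sAnc hb.1 ⟨hyb, hyb'⟩
  obtain ⟨a, ha⟩ := Finset.card_eq_one.1 (hb.2.2 _ ⟨hyb, hyb'⟩)
  have hz : z ∈ t.children (t.parent z) := mem_children.2 ⟨hz, rfl, hzy⟩
  rw [ha, Finset.mem_singleton] at hc hz
  exact Or.inr (hz ▸ hc ▸ hcb)

theorem IsTrunkEnd.eq (ht : t.IsTree) (hb : t.IsTrunkEnd b) (hc : t.IsTrunkEnd c) : b = c := by
  by_contra hne
  rcases hb.anc_or_anc ht hc.1 with h | h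
  · exact hb.2.1 (hc.2.2 b ⟨h, hne⟩)
  · exact hc.2.1 (hb.2.2 c ⟨h, Ne.symm hne⟩)

end Ancestry

section Subtree

variable {t : PreTree} {x c v : ℕ}

theorem mem_subtreeAt_verts : x ∈ (t.subtreeAt c).verts ↔ x ∈ t.verts ∧ t.Anc c x :=
  Finset.mem_filter

theorem children_subtreeAt (ht : t.IsTree) (hcx : t.Anc c x) :
    (t.subtreeAt c).children x = t.children x := by
  ext y
  simp only [mem_children, mem_subtreeAt_verts]
  show (y ∈ t.verts ∧ t.Anc c y) ∧ (if y = c then c else t.parent y) = x ∧ y ≠ x ↔ _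
  constructor
  · rintro ⟨⟨hy, -⟩, hyx, hne⟩
    split_ifs at hyx with hyc
    · exact absurd (hyc.trans hyx) hne
    · exact ⟨hy, hyx, hne⟩
  · rintro ⟨hy, rfl, hne⟩
    have hcy : t.Anc c y := hcx.trans (anc_of_parent_eq rfl)
    refine ⟨⟨hy, hcy⟩, ?_, hne⟩
    split_ifs with hyc
    · subst hyc
      exact ht.anc_antisymm (ht.parent_mem hy) hcx (anc_of_parent_eq rfl)
    · rfl

theorem stable_subtreeAt_iff (ht : t.IsTree) :
    (t.subtreeAt c).Stable ↔
      ∀ x ∈ t.verts, t.SAnc c x → t.wt x = 0 → 2 ≤ (t.children x).card := by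
  constructor
  · intro h x hx hcx hw
    rw [← children_subtreeAt ht hcx.1]
    exact h x (mem_subtreeAt_verts.2 ⟨hx, hcx.1⟩) (Ne.symm hcx.2) hw
  · intro h x hx hxc hw
    obtain ⟨hx, hcx⟩ := mem_subtreeAt_verts.1 hx
    rw [children_subtreeAt ht hcx]
    exact h x hx ⟨hcx, Ne.symm hxc⟩ hw

theorem Stable.simple (ht : t.IsTree) (hs : t.Stable) : t.Simple :=
  fun _ _ _ _ => (stable_subtreeAt_iff ht).2 fun x hx hcx hw => hs x hx (hcx.ne_root ht) hw

theorem Stable.subtreeAt_of_anc (ht : t.IsTree) (hv : v ∈ t.verts) (hvc : t.Anc v c)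
    (h : (t.subtreeAt v).Stable) : (t.subtreeAt c).Stable := by
  rw [stable_subtreeAt_iff ht] at h ⊢
  intro x hx hcx hw
  refine h x hx ⟨hvc.trans hcx.1, ?_⟩ hw
  rintro rfl
  exact hcx.2 (ht.anc_antisymm hv hcx.1 hvc)

end Subtree

section Normalize

variable {s : PreTree} {x : ℕ}

theorem mem_normalize_verts :
    x ∈ s.normalize.verts ↔ x ∈ s.verts ∧ ∀ p, s.SAnc p x → s.wt p = 0 :=
  Finset.mem_filter

theorem sAnc_normalize : s.normalize.SAnc = s.SAnc := rfl

theorem children_normalize :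
    s.normalize.children x = (s.children x).filter fun y => ∀ p, s.SAnc p y → s.wt p = 0 := by
  ext y
  rw [Finset.mem_filter, mem_children, mem_children, mem_normalize_verts]
  exact ⟨fun ⟨⟨hy, hkeep⟩, hyx⟩ => ⟨⟨hy, hyx⟩, hkeep⟩,
    fun ⟨⟨hy, hyx⟩, hkeep⟩ => ⟨⟨hy, hkeep⟩, hyx⟩⟩

theorem children_normalize_eq_empty (hw : s.wt x ≠ 0) : s.normalize.children x = ∅ := by
  rw [children_normalize, Finset.filter_eq_empty_iff]
  intro y hy hkeep
  exact hw (hkeep x ⟨anc_of_parent_eq (mem_children.1 hy).2.1, (mem_children.1 hy).2.2.symm⟩)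

theorem normalize_wt_eq_zero_iff (hx : x ∈ s.verts) : s.normalize.wt x = 0 ↔ s.wt x = 0 := by
  show (if s.wt x = 0 then 0 else _) = 0 ↔ _
  split_ifs with h
  · exact ⟨fun _ => h, fun _ => rfl⟩
  · refine ⟨fun h' => absurd h' ?_, fun h' => absurd h' h⟩
    exact (Nat.pos_of_ne_zero h).trans_le
      (Finset.single_le_sum (fun _ _ => Nat.zero_le _)
        (Finset.mem_filter.2 ⟨hx, anc_refl s x⟩)) |>.ne'

theorem IsTree.normalize (hs : s.IsTree) : s.normalize.IsTree := by
  refine ⟨mem_normalize_verts.2 ⟨hs.root_mem, fun p hp => ?_⟩, fun x hx => ?_,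
    hs.parent_root, fun x hx => hs.anc_root (mem_normalize_verts.1 hx).1⟩
  · exact absurd (hs.eq_root_of_anc_root hp.1) hp.2
  · obtain ⟨hx, hkeep⟩ := mem_normalize_verts.1 hx
    exact mem_normalize_verts.2 ⟨hs.parent_mem hx, fun p hp =>
      hkeep p (hp.trans_anc hs hx (anc_of_parent_eq rfl))⟩

theorem terminallyWeighted_normalize
    (hterm : ∀ x ∈ s.verts, s.children x = ∅ → 0 < s.wt x) :
    s.normalize.TerminallyWeighted := by
  intro x hx
  obtain ⟨hx, hkeep⟩ := mem_normalize_verts.1 hx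
  rw [Nat.pos_iff_ne_zero, Ne, normalize_wt_eq_zero_iff hx]
  refine ⟨children_normalize_eq_empty, fun hdrop hw => ?_⟩
  -- a ghost vertex keeps all its children, so it was already terminal in `s`
  rw [children_normalize, Finset.filter_eq_empty_iff] at hdrop
  refine (hterm x hx (Finset.eq_empty_of_forall_notMem fun y hy => hdrop hy ?_)).ne' hw
  obtain ⟨-, rfl, -⟩ := mem_children.1 hy
  intro p hp
  rcases hp.eq_or_sAnc_parent with rfl | hp
  · exact hw
  · exact hkeep p hp

section PositiveTerminal

variable (hs : s.IsTree) (hpos : ∀ x ∈ s.verts, s.wt x ≠ 0 → s.children x = ∅)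
include hs hpos

theorem normalize_verts_of_positive_terminal : s.normalize.verts = s.verts := by
  refine Finset.filter_true_of_mem fun x hx p hp => ?_
  by_contra hw
  obtain ⟨c, hc, -⟩ := hs.exists_child_of_sAnc hx hp
  simp [hpos p (hp.1.mem hs hx) hw] at hc

theorem normalize_children_of_positive_terminal : s.normalize.children x = s.children x := by
  rw [children, normalize_verts_of_positive_terminal hs hpos]
  rfl

theorem Simple.normalize (h : s.Simple) : s.normalize.Simple := by
  have hverts := normalize_verts_of_positive_terminal hs hpos
  have hchildren : ∀ x, s.normalize.children x = s.children x := fun x =>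
    normalize_children_of_positive_terminal hs hpos
  intro b hb c hc
  simp only [IsTrunkEnd, hverts, hchildren, sAnc_normalize] at hb hc
  rw [stable_subtreeAt_iff hs.normalize, hverts]
  intro x hx hcx hw
  rw [normalize_wt_eq_zero_iff hx] at hw
  rw [hchildren]
  exact (stable_subtreeAt_iff hs).1 (h b hb c hc) x hx hcx hw

end PositiveTerminal

end Normalize

def reattachSiblings (t : PreTree) (v : ℕ) : PreTree where
  verts := t.verts
  root := t.root
  parent := fun u =>
    if t.parent u = t.parent v ∧ u ≠ t.parent v ∧ u ≠ v then v else t.parent u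
  wt := t.wt

theorem advance_eq_normalize_reattachSiblings (t : PreTree) (v : ℕ) :
    t.advance v = (t.reattachSiblings v).normalize := rfl

section ReattachSiblings

variable {t : PreTree} {a b c v x : ℕ} (hv : v ∈ t.children b)
include hv

theorem reattachSiblings_parent (z : ℕ) :
    (t.reattachSiblings v).parent z =
      if t.parent z = b ∧ z ≠ b ∧ z ≠ v then v else t.parent z := by
  rw [← (mem_children.1 hv).2.1]
  rfl

theorem reattachSiblings_parent_self : (t.reattachSiblings v).parent v = b := by
  rw [reattachSiblings_parent hv, if_neg fun h => h.2.2 rfl, (mem_children.1 hv).2.1]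

theorem reattachSiblings_parent_of_mem_children (hc : c ∈ t.children b) (hcv : c ≠ v) :
    (t.reattachSiblings v).parent c = v := by
  obtain ⟨-, hcb, hne⟩ := mem_children.1 hc
  rw [reattachSiblings_parent hv, if_pos ⟨hcb, hne, hcv⟩]

theorem reattachSiblings_parent_of_anc (ht : t.IsTree) (hx : t.Anc x b) :
    (t.reattachSiblings v).parent x = t.parent x := by
  rw [reattachSiblings_parent hv, if_neg]
  rintro ⟨hxb, hne, -⟩
  exact hne (ht.anc_antisymm (ht.mem_of_mem_children hv) hx (anc_of_parent_eq hxb))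

theorem reattachSiblings_anc_iff_of_anc (ht : t.IsTree) (hx : t.Anc x b) :
    (t.reattachSiblings v).Anc a x ↔ t.Anc a x := by
  suffices h : ∀ n, (t.reattachSiblings v).parent^[n] x = t.parent^[n] x by
    simp only [Anc, h]
  intro n
  induction n generalizing x with
  | zero => rfl
  | succ n ih =>
    rw [Function.iterate_succ_apply, Function.iterate_succ_apply,
      reattachSiblings_parent_of_anc hv ht hx, ih ((anc_of_parent_eq rfl).trans hx)]

theorem reattachSiblings_anc_iff (hcb : ¬ t.Anc c b) (hcv : c ≠ v) :
    (t.reattachSiblings v).Anc c x ↔ t.Anc c x := by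
  constructor
  · intro h
    refine Anc.tail_induction (P := t.Anc c) h (anc_refl t c) fun y z _ hzy hcy => ?_
    rw [reattachSiblings_parent hv] at hzy
    split_ifs at hzy
    · subst hzy
      exact absurd ((mem_children.1 hv).2.1 ▸ hcy.anc_parent hcv) hcb
    · exact hcy.trans (anc_of_parent_eq hzy)
  · intro h
    refine Anc.tail_induction (P := (t.reattachSiblings v).Anc c) h (anc_refl _ c)
      fun y z hcy hzy hcy' => hcy'.trans (anc_of_parent_eq ?_)
    rw [reattachSiblings_parent hv, if_neg, hzy]
    rintro ⟨hzb, -⟩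
    exact hcb (hzb ▸ hzy ▸ hcy)

theorem mem_reattachSiblings_children :
    c ∈ (t.reattachSiblings v).children x ↔
      c ∈ t.verts ∧ (if t.parent c = b ∧ c ≠ b ∧ c ≠ v then v else t.parent c) = x ∧
        c ≠ x := by
  rw [← reattachSiblings_parent hv]
  exact mem_children

theorem reattachSiblings_children_of_ne (hxb : x ≠ b) (hxv : x ≠ v) :
    (t.reattachSiblings v).children x = t.children x := by
  ext c
  rw [mem_reattachSiblings_children hv, mem_children]
  split_ifs with h
  · exact ⟨fun h' => absurd h'.2.1.symm hxv, fun h' => absurd (h'.2.1.symm.trans h.1) hxb⟩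
  · rfl

theorem reattachSiblings_children_left : (t.reattachSiblings v).children b = {v} := by
  obtain ⟨hvv, hvb, hne⟩ := mem_children.1 hv
  ext c
  rw [mem_reattachSiblings_children hv, Finset.mem_singleton]
  split_ifs with h
  · exact ⟨fun h' => absurd h'.2.1 hne, fun h' => absurd h' h.2.2⟩
  · refine ⟨fun ⟨_, hcb, hcb'⟩ => ?_, ?_⟩
    · by_contra hcv
      exact h ⟨hcb, hcb', hcv⟩
    · rintro rfl
      exact ⟨hvv, hvb, hne⟩

theorem mem_reattachSiblings_children_self :
    c ∈ (t.reattachSiblings v).children v ↔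
      c ∈ t.children v ∨ (c ∈ t.children b ∧ c ≠ v) := by
  rw [mem_reattachSiblings_children hv, mem_children, mem_children]
  split_ifs with h
  · exact ⟨fun h' => Or.inr ⟨⟨h'.1, h.1, h.2.1⟩, h.2.2⟩,
      fun h' => ⟨h'.elim (·.1) (·.1.1), rfl, h.2.2⟩⟩
  · constructor
    · exact Or.inl
    · rintro (h' | ⟨⟨hc, hcb, hcb'⟩, hcv⟩)
      · exact h'
      · exact absurd ⟨hcb, hcb', hcv⟩ h

theorem children_subset_reattachSiblings_children (hxb : x ≠ b) :
    t.children x ⊆ (t.reattachSiblings v).children x := by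
  by_cases hxv : x = v
  · subst hxv
    exact fun c hc => (mem_reattachSiblings_children_self hv).2 (Or.inl hc)
  · rw [reattachSiblings_children_of_ne hv hxb hxv]

theorem IsTree.reattachSiblings (ht : t.IsTree) : (t.reattachSiblings v).IsTree := by
  have hb := ht.mem_of_mem_children hv
  refine ⟨ht.root_mem, fun x hx => ?_, ?_, fun x hx => ?_⟩
  · rw [reattachSiblings_parent hv]
    split_ifs
    exacts [(mem_children.1 hv).1, ht.parent_mem hx]
  · exact (reattachSiblings_parent_of_anc hv ht (ht.anc_root hb)).trans ht.parent_root
  · have hrv : (t.reattachSiblings v).Anc t.root v :=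
      ((reattachSiblings_anc_iff_of_anc hv ht (anc_refl t b)).2 (ht.anc_root hb)).trans
        (anc_of_parent_eq (reattachSiblings_parent_self hv))
    refine Anc.tail_induction (P := (t.reattachSiblings v).Anc t.root) (ht.anc_root hx)
      (anc_refl _ _) fun y z _ hzy hry => ?_
    by_cases hz : t.parent z = b ∧ z ≠ b ∧ z ≠ v
    · exact hrv.trans (anc_of_parent_eq (by rw [reattachSiblings_parent hv, if_pos hz]))
    · exact hry.trans (anc_of_parent_eq (by rw [reattachSiblings_parent hv, if_neg hz, hzy]))

theorem TerminallyWeighted.reattachSiblings_pos_of_children_eq_empty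
    (htw : t.TerminallyWeighted) (hx : x ∈ (t.reattachSiblings v).verts)
    (hterm : (t.reattachSiblings v).children x = ∅) : 0 < (t.reattachSiblings v).wt x := by
  by_cases hxb : x = b
  · subst hxb
    simp [reattachSiblings_children_left hv] at hterm
  · exact (htw x hx).2 (Finset.subset_empty.1
      (hterm ▸ children_subset_reattachSiblings_children hv hxb))

end ReattachSiblings

section Advance

variable {t : PreTree} {b c v x : ℕ}

theorem IsTree.advance (ht : t.IsTree) (hv : v ∈ t.children b) : (t.advance v).IsTree :=
  (ht.reattachSiblings hv).normalize

theorem TerminallyWeighted.advance (htw : t.TerminallyWeighted) (hv : v ∈ t.children b) :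
    (t.advance v).TerminallyWeighted :=
  terminallyWeighted_normalize fun _ hx => htw.reattachSiblings_pos_of_children_eq_empty hv hx

section PositiveVertex

variable (ht : t.IsTree) (htw : t.TerminallyWeighted) (hb : t.IsTrunkEnd b)
  (hv : v ∈ t.children b) (hw : t.wt v ≠ 0)
include ht htw hb hv hw

theorem anc_or_eq_of_mem_advance_verts (hx : x ∈ (t.advance v).verts) : t.Anc x b ∨ x = v := by
  rw [advance_eq_normalize_reattachSiblings, mem_normalize_verts] at hx
  obtain ⟨hx, hkeep⟩ := hx
  by_contra! h
  have hbx : t.SAnc b x :=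
    ⟨(hb.anc_or_anc ht hx).resolve_right h.1, fun e => h.1 (e ▸ anc_refl t b)⟩
  obtain ⟨c, hc, hcx⟩ := ht.exists_child_of_sAnc hx hbx
  have hcv : c ≠ v := by
    rintro rfl
    exact hw (htw.wt_eq_zero_of_sAnc ht hx ⟨hcx, h.2.symm⟩)
  -- `x` hangs below the sibling `c` of `v`, which now hangs below the positive vertex `v`
  exact hw (hkeep v ⟨(anc_of_parent_eq (reattachSiblings_parent_of_mem_children hv hc hcv)).trans
    ((reattachSiblings_anc_iff hv (ht.not_anc_of_mem_children hc) hcv).2 hcx), h.2.symm⟩)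

theorem card_advance_children_le_one (hx : x ∈ (t.advance v).verts) :
    ((t.advance v).children x).card ≤ 1 := by
  rw [advance_eq_normalize_reattachSiblings]
  rcases anc_or_eq_of_mem_advance_verts ht htw hb hv hw hx with hxb | rfl
  · rw [children_normalize]
    refine (Finset.card_filter_le _ _).trans ?_
    by_cases hxb' : x = b
    · rw [hxb', reattachSiblings_children_left hv, Finset.card_singleton]
    · have hxv : x ≠ v := by
        rintro rfl
        exact ht.not_anc_of_mem_children hv hxb
      rw [reattachSiblings_children_of_ne hv hxb' hxv, hb.2.2 x ⟨hxb, hxb'⟩]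
  · rw [children_normalize_eq_empty (s := t.reattachSiblings x) hw, Finset.card_empty]
    exact zero_le_one

theorem advance_simple_of_wt_ne_zero : (t.advance v).Simple := by
  intro b' hb' c hc
  have hle := card_advance_children_le_one ht htw hb hv hw hb'.1
  have hempty : (t.advance v).children b' = ∅ :=
    Finset.card_eq_zero.1 (by have := hb'.2.1; omega)
  simp [hempty] at hc

end PositiveVertex

section GhostVertex

variable (ht : t.IsTree) (htw : t.TerminallyWeighted) (hv : v ∈ t.children b)
  (hw : t.wt v = 0)

include htw hv hw in
theorem reattachSiblings_children_eq_empty_of_wt_ne_zero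
    (hx : x ∈ (t.reattachSiblings v).verts) (hwx : (t.reattachSiblings v).wt x ≠ 0) :
    (t.reattachSiblings v).children x = ∅ := by
  have hxv : x ≠ v := by
    rintro rfl
    exact hwx hw
  have hxb : x ≠ b := by
    rintro rfl
    exact hwx (htw.wt_eq_zero_of_mem_children hx hv)
  rw [reattachSiblings_children_of_ne hv hxb hxv]
  exact htw.children_eq_empty hx hwx

include ht htw hv hw in
theorem isTrunkEnd_reattachSiblings (hb : t.IsBranchVertex b) :
    (t.reattachSiblings v).IsTrunkEnd v := by
  obtain ⟨hvv, hvb, hne⟩ := mem_children.1 hv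
  refine ⟨hvv, ?_, fun p hp => ?_⟩
  · -- `v` keeps a child of its own and gains a sibling
    obtain ⟨x, hx⟩ := Finset.nonempty_iff_ne_empty.2 fun h => ((htw v hvv).2 h).ne' hw
    obtain ⟨c, hc, hcv⟩ := Finset.exists_mem_ne hb.2 v
    refine (Finset.one_lt_card.2 ⟨x, (mem_reattachSiblings_children_self hv).2 (Or.inl hx),
      c, (mem_reattachSiblings_children_self hv).2 (Or.inr ⟨hc, hcv⟩), ?_⟩).ne'
    rintro rfl
    exact hne ((mem_children.1 hx).2.1.symm.trans (mem_children.1 hc).2.1)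
  · have hpb : t.Anc p b := (reattachSiblings_anc_iff_of_anc hv ht (anc_refl t b)).1
      (reattachSiblings_parent_self hv ▸ hp.1.anc_parent hp.2)
    by_cases hpb' : p = b
    · rw [hpb', reattachSiblings_children_left hv, Finset.card_singleton]
    · have hpv : p ≠ v := by
        rintro rfl
        exact ht.not_anc_of_mem_children hv hpb
      rw [reattachSiblings_children_of_ne hv hpb' hpv]
      exact hb.1.2.2 p ⟨hpb, hpb'⟩

include ht hv in
theorem Simple.sAnc_and_stable_of_mem_reattachSiblings_children (hsimp : t.Simple)
    (hb : t.IsTrunkEnd b) (hc : c ∈ (t.reattachSiblings v).children v) :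
    t.SAnc b c ∧ (t.subtreeAt c).Stable := by
  rcases (mem_reattachSiblings_children_self hv).1 hc with hc | ⟨hc, -⟩
  · obtain ⟨-, hpc, -⟩ := mem_children.1 hc
    refine ⟨⟨(anc_of_parent_eq (mem_children.1 hv).2.1).trans (anc_of_parent_eq hpc), ?_⟩,
      (hsimp b hb v hv).subtreeAt_of_anc ht (mem_children.1 hv).1 (anc_of_parent_eq hpc)⟩
    rintro rfl
    exact ht.not_anc_of_mem_children hv (anc_of_parent_eq hpc)
  · exact ⟨⟨anc_of_parent_eq (mem_children.1 hc).2.1, (mem_children.1 hc).2.2.symm⟩,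
      hsimp b hb c hc⟩

include ht htw hv hw in
theorem Simple.reattachSiblings (hsimp : t.Simple) (hb : t.IsBranchVertex b) :
    (t.reattachSiblings v).Simple := by
  intro b' hb' c hc
  rw [hb'.eq (ht.reattachSiblings hv) (isTrunkEnd_reattachSiblings ht htw hv hw hb)] at hc
  obtain ⟨hbc, hstab⟩ := hsimp.sAnc_and_stable_of_mem_reattachSiblings_children ht hv hb.1 hc
  have hcv : c ≠ v := (mem_children.1 hc).2.2
  have hcb : ¬ t.Anc c b := hbc.not_anc ht (ht.mem_of_mem_children hv)
  rw [stable_subtreeAt_iff (ht.reattachSiblings hv)]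
  intro x hx hcx hwx
  have hcx' : t.SAnc c x := ⟨(reattachSiblings_anc_iff hv hcb hcv).1 hcx.1, hcx.2⟩
  have hxb : x ≠ b := by
    rintro rfl
    exact hcb hcx'.1
  have hxv : x ≠ v := by
    rintro rfl
    exact hcb ((mem_children.1 hv).2.1 ▸ hcx'.1.anc_parent hcv)
  rw [reattachSiblings_children_of_ne hv hxb hxv]
  exact (stable_subtreeAt_iff ht).1 hstab x hx hcx' hwx

end GhostVertex

theorem Simple.advance (ht : t.IsTree) (htw : t.TerminallyWeighted) (hsimp : t.Simple)
    (hb : t.IsBranchVertex b) (hv : v ∈ t.children b) : (t.advance v).Simple := by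
  by_cases hw : t.wt v = 0
  · exact (hsimp.reattachSiblings ht htw hv hw hb).normalize (ht.reattachSiblings hv)
      fun _ => reattachSiblings_children_eq_empty_of_wt_ne_zero htw hv hw
  · exact advance_simple_of_wt_ne_zero ht htw hb.1 hv hw

end Advance

theorem isTree_terminallyWeighted_simple_of_mem_LambdaK {d : ℕ} :
    ∀ {k : ℕ} {t : PreTree}, t ∈ LambdaK d k →
      t.IsTree ∧ t.TerminallyWeighted ∧ t.Simple
  | 0, _, h | 1, _, h => ⟨h.1, h.2.2.1, h.2.1.simple h.1⟩
  | _ + 2, _, Or.inl ⟨h, _⟩ => isTree_terminallyWeighted_simple_of_mem_LambdaK h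
  | _ + 2, _, Or.inr ⟨_, h, _, _, _, hb, hv, rfl⟩ =>
    have ⟨ht, htw, hsimp⟩ := isTree_terminallyWeighted_simple_of_mem_LambdaK h
    ⟨ht.advance hv, htw.advance hv, hsimp.advance ht htw hb hv⟩

end PreTree

theorem lambdaK_simple_general (d k : ℕ) :
    ∀ t ∈ PreTree.LambdaK d k, t.Simple :=
  fun _ ht => (PreTree.isTree_terminallyWeighted_simple_of_mem_LambdaK ht).2.2

/-- for `1 ≤ k ≤ d`, every tree in `Λ_{d,[k]}` is simple. -/
theorem lambdaK_simple (d k : ℕ) (hd : 0 < d) (hk1 : 1 ≤ k) (hkd : k ≤ d) :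
    ∀ t ∈ PreTree.LambdaK d k, t.Simple :=
  lambdaK_simple_general d k
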